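/- Let r ∈ ℤ_{≥0}, λ > −1, and v ∈ ℝ. The function h(u) = e_{2r+1}(uv, λ) satisfies, for every u ≠ 0, the differential-difference equation h''(u) + ((2λ+1)/u) · h'(u) − (λ + 1/2 + 2r(λ+r+1)) · (h(u) − h(−u))/u² = −v² · h(u); that is, u ↦ e_{2r+1}(uv,λ) is an eigenfunction of the operator δ_λ with eigenvalue −v². -/

import Mathlib

open Real MeasureTheory Finset

/-- Normalized Bessel function j_lambda(v). -/
noncomputable def nbessel (l v : ℝ) : ℝ :=
  Real.Gamma (l + 1) *
    ∑' k : ℕ, (-1 : ℝ) ^ k / (Nat.factorial k * Real.Gamma (k + l + 1)) * (v / 2) ^ (2 * k)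

/-- Pochhammer symbol (z)_n = z(z+1)...(z+n-1), with (z)_0 = 1. -/
noncomputable def poch (z : ℝ) (n : ℕ) : ℝ := ∏ i ∈ Finset.range n, (z + i)

/-- The kernel e_{2r+1}(v, lambda). -/
noncomputable def e2r1 (r : ℕ) (l : ℝ) (v : ℝ) : ℂ :=
  (nbessel l v : ℂ) + Complex.I * (-1 : ℂ) ^ (r + 1) *
    ((v ^ (2 * r + 1) / (2 ^ (2 * r + 1) * poch (l + 1) (2 * r + 1)) : ℝ) : ℂ) *
    (nbessel (l + (2 * r + 1)) v : ℂ)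

/-- The differential-difference operator delta_lambda (for u ≠ 0). -/
noncomputable def deltaOp (r : ℕ) (l : ℝ) (g : ℝ → ℂ) (u : ℝ) : ℂ :=
  iteratedDeriv 2 g u + (((2 * l + 1) / u : ℝ) : ℂ) * deriv g u -
    ((l + 1 / 2 + 2 * r * (l + r + 1) : ℝ) : ℂ) * (g u - g (-u)) / (u : ℂ) ^ 2

namespace Stmt16Aux

open Filter

noncomputable section


/-- Growth estimate `2n+s ≤ (s+2)·2^n`. -/
lemma two_mul_add_le (s : ℕ) : ∀ n : ℕ, ((2*n+s : ℕ) : ℝ) ≤ (s+2) * 2^n := by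
  intro n
  induction n with
  | zero => push_cast; norm_num
  | succ k ih =>
      have h1 : (1:ℝ) ≤ 2^k := one_le_pow₀ one_le_two
      have hs2 : (2:ℝ) ≤ (s+2) * 2^k := by nlinarith [Nat.cast_nonneg (α := ℝ) s]
      push_cast at ih ⊢
      calc (2*((k:ℝ)+1)+s) = (2*k+s) + 2 := by ring
        _ ≤ (s+2)*2^k + (s+2)*2^k := by linarith
        _ = (s+2)*2^(k+1) := by ring

section Core

variable (b : ℕ → ℂ) (s : ℕ) (lam v : ℝ)

def gf (y : ℝ) : ℂ := ∑' n : ℕ, b n * (y : ℂ) ^ (2*n+s)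
def gf1 (y : ℝ) : ℂ := ∑' n : ℕ, b n * ((2*n+s : ℕ) : ℂ) * (y : ℂ) ^ (2*n+s-1)
def gf2 (y : ℝ) : ℂ :=
  ∑' n : ℕ, b n * ((2*n+s : ℕ) : ℂ) * ((2*n+s-1 : ℕ) : ℂ) * (y : ℂ) ^ (2*n+s-2)

variable (hlam : -1 < lam)
variable (hrec : ∀ k : ℕ,
  ((((2*k+2) * (2*k+2*s+2+2*lam)) : ℝ) : ℂ) * b (k+1) = -(v:ℂ)^2 * b k)

include hlam

lemma cpos (k : ℕ) : (0:ℝ) < (2*k+2) * (2*k+2*s+2+2*lam) := by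
  have h1 : (0:ℝ) ≤ (k:ℝ) := Nat.cast_nonneg k
  have h2 : (0:ℝ) ≤ (s:ℝ) := Nat.cast_nonneg s
  nlinarith

include hrec

lemma norm_rec (k : ℕ) :
    ((2*k+2) * (2*k+2*s+2+2*lam)) * ‖b (k+1)‖ = v^2 * ‖b k‖ := by
  have h := congrArg norm (hrec k)
  rw [norm_mul, norm_mul, norm_neg, norm_pow, Complex.norm_real, Complex.norm_real,
    Real.norm_eq_abs, Real.norm_eq_abs, abs_of_pos (cpos s lam hlam k), sq_abs] at h
  exact h

lemma master (M : ℝ) (hM : 0 ≤ M) : Summable fun k => ‖b k‖ * M ^ k := by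
  apply summable_of_ratio_norm_eventually_le (r := 1/2) (by norm_num)
  have htend : Tendsto (fun k : ℕ => ((2*k+2) * (2*k+2*s+2+2*lam) : ℝ)) atTop atTop := by
    apply tendsto_atTop_mono (f := fun k : ℕ => (2*lam+2) * (k:ℝ))
    · intro k
      have h1 : (0:ℝ) ≤ (k:ℝ) := Nat.cast_nonneg k
      have h2 : (0:ℝ) ≤ (s:ℝ) := Nat.cast_nonneg s
      have h3 : (0:ℝ) ≤ (k:ℝ) * (lam+1) := mul_nonneg h1 (by linarith)
      nlinarith [mul_nonneg h1 h2, sq_nonneg (k:ℝ)]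
    · exact (tendsto_const_mul_atTop_of_pos (by linarith)).2 tendsto_natCast_atTop_atTop
  filter_upwards [htend.eventually_ge_atTop (2*(v^2*M)+1)] with k hk
  set c : ℝ := (2*k+2) * (2*k+2*s+2+2*lam) with hc
  have hcpos : 0 < c := cpos s lam hlam k
  have hnr := norm_rec b s lam v hlam hrec k
  rw [← hc] at hnr
  have hb1 : ‖b (k+1)‖ = v^2 * ‖b k‖ / c := by
    field_simp
    linear_combination hnr
  rw [Real.norm_of_nonneg (by positivity), Real.norm_of_nonneg (by positivity)]
  have hexp : ‖b (k+1)‖ * M ^ (k+1) = (v^2 * M / c) * (‖b k‖ * M^k) := by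
    rw [hb1, pow_succ]; ring
  rw [hexp]
  have hfrac : v^2 * M / c ≤ 1/2 := by
    rw [div_le_iff₀ hcpos]
    nlinarith [sq_nonneg v]
  have hnn : 0 ≤ ‖b k‖ * M^k := by positivity
  exact mul_le_mul_of_nonneg_right hfrac hnn

lemma sum_aux (M : ℝ) (hM : 0 ≤ M) (C : ℝ) (f : ℕ → ℂ)
    (hf : ∀ n, ‖f n‖ ≤ C * (‖b n‖ * M ^ n)) : Summable f :=
  Summable.of_norm_bounded ((master b s lam v hlam hrec M hM).mul_left C) hf

omit hlam hrec in
lemma norm_term (u : ℝ) (n : ℕ) : ‖b n * (u:ℂ) ^ (2*n+s)‖ = |u|^s * (‖b n‖ * (u^2)^n) := by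
  rw [norm_mul, norm_pow, Complex.norm_real, Real.norm_eq_abs, pow_add, pow_mul, sq_abs]
  ring

lemma sumT (u : ℝ) : Summable (fun n => b n * (u:ℂ)^(2*n+s)) :=
  sum_aux b s lam v hlam hrec (u^2) (sq_nonneg u) (|u|^s) _
    (fun n => le_of_eq (norm_term b s u n))

lemma hasDerivAt_gf (y : ℝ) : HasDerivAt (gf b s) (gf1 b s y) y := by
  set R := |y| + 1 with hR
  have hR1 : (1:ℝ) ≤ R := by
    have := abs_nonneg y; rw [hR]; linarith
  have h0R : (0:ℝ) < R := by linarith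
  simp only [gf, gf1]
  refine hasDerivAt_tsum_of_isPreconnected
    (u := fun n => ((s+2) * R^s) * (‖b n‖ * (2*R^2)^n))
    (g := fun (n : ℕ) (z : ℝ) => b n * (z:ℂ)^(2*n+s))
    (g' := fun (n : ℕ) (z : ℝ) => b n * ((2*n+s:ℕ):ℂ) * (z:ℂ)^(2*n+s-1))
    (t := Metric.ball (0:ℝ) R) (y₀ := (0:ℝ))
    ?_ Metric.isOpen_ball ?_ ?_ ?_ ?_ ?_ ?_
  · exact (master b s lam v hlam hrec (2*R^2) (by positivity)).mul_left _
  · exact (convex_ball _ _).isPreconnected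
  · intro n z hz
    have h := ((hasDerivAt_pow (2*n+s) ((z:ℝ):ℂ)).comp_ofReal).const_mul (b n)
    simpa [mul_assoc] using h
  · intro n z hz
    have hz' : |z| ≤ R := by
      have : |z| < R := by simpa [Real.dist_eq] using hz
      exact this.le
    have h1 : ‖b n * ((2*n+s:ℕ):ℂ) * (z:ℂ)^(2*n+s-1)‖
        = ‖b n‖ * ((2*n+s:ℕ):ℝ) * |z|^(2*n+s-1) := by
      rw [norm_mul, norm_mul, norm_pow, Complex.norm_natCast, Complex.norm_real,
        Real.norm_eq_abs]
    rw [h1]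
    have h2 : |z|^(2*n+s-1) ≤ R^s * (R^2)^n := by
      calc |z|^(2*n+s-1) ≤ R^(2*n+s-1) := pow_le_pow_left₀ (abs_nonneg z) hz' _
        _ ≤ R^(2*n+s) := pow_le_pow_right₀ hR1 (Nat.sub_le _ _)
        _ = R^s * (R^2)^n := by rw [pow_add, pow_mul]; ring
    have h3 : ((2*n+s:ℕ):ℝ) ≤ (s+2)*2^n := two_mul_add_le s n
    have step1 : ‖b n‖ * ((2*n+s:ℕ):ℝ) ≤ ‖b n‖ * ((s+2)*2^n) :=
      mul_le_mul_of_nonneg_left h3 (norm_nonneg (b n))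
    calc ‖b n‖ * ((2*n+s:ℕ):ℝ) * |z|^(2*n+s-1)
        ≤ (‖b n‖ * ((s+2)*2^n)) * (R^s * (R^2)^n) :=
          mul_le_mul step1 h2 (pow_nonneg (abs_nonneg z) _) (by positivity)
      _ = ((s+2) * R^s) * (‖b n‖ * (2*R^2)^n) := by rw [mul_pow]; ring
  · exact Metric.mem_ball_self h0R
  · apply sum_aux b s lam v hlam hrec 1 zero_le_one 1
    intro n
    simp only [Complex.ofReal_zero]
    rcases Nat.eq_zero_or_pos (2*n+s) with h|h
    · simp [h]
    · simp only [zero_pow h.ne', mul_zero, norm_zero, one_pow, mul_one, one_mul]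
      positivity
  · simp only [Metric.mem_ball, Real.dist_eq, sub_zero, hR]
    linarith [abs_nonneg y]

lemma hasDerivAt_gf1 (y : ℝ) : HasDerivAt (gf1 b s) (gf2 b s y) y := by
  set R := |y| + 1 with hR
  have hR1 : (1:ℝ) ≤ R := by
    have := abs_nonneg y; rw [hR]; linarith
  have h0R : (0:ℝ) < R := by linarith
  simp only [gf1, gf2]
  refine hasDerivAt_tsum_of_isPreconnected
    (u := fun n => (((s+2)^2) * R^s) * (‖b n‖ * (4*R^2)^n))
    (g := fun (n : ℕ) (z : ℝ) => b n * ((2*n+s:ℕ):ℂ) * (z:ℂ)^(2*n+s-1))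
    (g' := fun (n : ℕ) (z : ℝ) => b n * ((2*n+s:ℕ):ℂ) * ((2*n+s-1:ℕ):ℂ) * (z:ℂ)^(2*n+s-2))
    (t := Metric.ball (0:ℝ) R) (y₀ := (0:ℝ))
    ?_ Metric.isOpen_ball ?_ ?_ ?_ ?_ ?_ ?_
  · exact (master b s lam v hlam hrec (4*R^2) (by positivity)).mul_left _
  · exact (convex_ball _ _).isPreconnected
  · intro n z hz
    have h := ((hasDerivAt_pow (2*n+s-1) ((z:ℝ):ℂ)).comp_ofReal).const_mul
      (b n * ((2*n+s:ℕ):ℂ))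
    simpa [mul_assoc, Nat.sub_sub] using h
  · intro n z hz
    have hz' : |z| ≤ R := by
      have : |z| < R := by simpa [Real.dist_eq] using hz
      exact this.le
    have h1 : ‖b n * ((2*n+s:ℕ):ℂ) * ((2*n+s-1:ℕ):ℂ) * (z:ℂ)^(2*n+s-2)‖
        = ‖b n‖ * ((2*n+s:ℕ):ℝ) * ((2*n+s-1:ℕ):ℝ) * |z|^(2*n+s-2) := by
      rw [norm_mul, norm_mul, norm_mul, norm_pow, Complex.norm_natCast, Complex.norm_natCast,
        Complex.norm_real, Real.norm_eq_abs]
    rw [h1]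
    have h2 : |z|^(2*n+s-2) ≤ R^s * (R^2)^n := by
      calc |z|^(2*n+s-2) ≤ R^(2*n+s-2) := pow_le_pow_left₀ (abs_nonneg z) hz' _
        _ ≤ R^(2*n+s) := pow_le_pow_right₀ hR1 (Nat.sub_le _ _)
        _ = R^s * (R^2)^n := by rw [pow_add, pow_mul]; ring
    have h3 : ((2*n+s:ℕ):ℝ) ≤ (s+2)*2^n := two_mul_add_le s n
    have h4 : ((2*n+s-1:ℕ):ℝ) ≤ (s+2)*2^n := by
      exact le_trans (Nat.cast_le.mpr (Nat.sub_le _ _)) h3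
    have step1 : ‖b n‖ * ((2*n+s:ℕ):ℝ) * ((2*n+s-1:ℕ):ℝ)
        ≤ ‖b n‖ * ((s+2)*2^n) * ((s+2)*2^n) := by
      have a1 : (0:ℝ) ≤ ((2*n+s-1:ℕ):ℝ) := Nat.cast_nonneg _
      have a2 : (0:ℝ) ≤ ‖b n‖ * ((s+2)*2^n) := by positivity
      exact mul_le_mul (mul_le_mul_of_nonneg_left h3 (norm_nonneg (b n))) h4 a1 a2
    calc ‖b n‖ * ((2*n+s:ℕ):ℝ) * ((2*n+s-1:ℕ):ℝ) * |z|^(2*n+s-2)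
        ≤ (‖b n‖ * ((s+2)*2^n) * ((s+2)*2^n)) * (R^s * (R^2)^n) := by
          refine mul_le_mul step1 h2 (pow_nonneg (abs_nonneg z) _) (by positivity)
      _ = (((s+2)^2) * R^s) * (‖b n‖ * (4*R^2)^n) := by
          rw [mul_pow, show ((4:ℝ))^n = 2^n * 2^n by rw [← mul_pow]; norm_num]
          ring
  · exact Metric.mem_ball_self h0R
  · apply sum_aux b s lam v hlam hrec 1 zero_le_one (s+2)
    intro n
    simp only [Complex.ofReal_zero]
    rcases Nat.eq_zero_or_pos (2*n+s-1) with h|h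
    · rw [h, pow_zero, mul_one, norm_mul, Complex.norm_natCast, one_pow, mul_one]
      have : ((2*n+s:ℕ):ℝ) ≤ s+2 := by
        rcases Nat.eq_zero_or_pos n with hn|hn
        · subst hn; push_cast; linarith
        · exfalso; omega
      calc ‖b n‖ * ((2*n+s:ℕ):ℝ) ≤ ‖b n‖ * (s+2) :=
            mul_le_mul_of_nonneg_left this (norm_nonneg _)
        _ = (s+2) * ‖b n‖ := by ring
    · simp only [zero_pow h.ne', mul_zero, norm_zero, one_pow, mul_one]
      positivity
  · simp only [Metric.mem_ball, Real.dist_eq, sub_zero, hR]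
    linarith [abs_nonneg y]

omit hlam hrec in
lemma pow_shift1 (z : ℂ) (m : ℕ) : (m:ℂ) * z^(m-1) * z = (m:ℂ) * z^m := by
  cases m with
  | zero => simp
  | succ k => simp only [Nat.add_sub_cancel]; rw [pow_succ]; ring

omit hlam hrec in
lemma pow_shift2 (z : ℂ) (m : ℕ) :
    (m:ℂ) * ((m-1:ℕ):ℂ) * z^(m-2) * z^2 = (m:ℂ) * ((m:ℂ)-1) * z^m := by
  match m with
  | 0 => simp
  | 1 => norm_num
  | (k+2) =>
    have h1 : k+2-1 = k+1 := rfl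
    have h2 : k+2-2 = k := rfl
    rw [h1, h2, pow_add]
    push_cast
    ring

lemma core_eq (u : ℝ) (hu : u ≠ 0) (mu : ℝ)
    (hmu : mu * (1 - (-1:ℝ)^s) = s * (s + 2*lam)) :
    gf2 b s u + (((2*lam+1)/u : ℝ) : ℂ) * gf1 b s u
      - (mu : ℂ) * (gf b s u - gf b s (-u)) / (u:ℂ)^2 = -(v:ℂ)^2 * gf b s u := by
  have hU : (u:ℂ) ≠ 0 := Complex.ofReal_ne_zero.2 hu
  have h2n : ∀ n : ℕ, (1:ℝ) ≤ 2^n := fun n => one_le_pow₀ one_le_two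
  have hsnn : (0:ℝ) ≤ (s:ℝ) := Nat.cast_nonneg s
  have hTsum : Summable (fun n => b n * (u:ℂ)^(2*n+s)) := sumT b s lam v hlam hrec u
  -- summability of the three termwise series
  have hS2 : Summable (fun n : ℕ =>
      (((2*n+s:ℕ):ℂ) * (((2*n+s:ℕ):ℂ) - 1)) * (b n * (u:ℂ)^(2*n+s))) := by
    apply sum_aux b s lam v hlam hrec (4*u^2) (by positivity) ((2*(s+2)^2) * |u|^s)
    intro n
    rw [norm_mul, norm_term b s u n, norm_mul, Complex.norm_natCast]
    have hg1 : ((2*n+s:ℕ):ℝ) ≤ (s+2)*2^n := two_mul_add_le s n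
    have hg0 : (0:ℝ) ≤ ((2*n+s:ℕ):ℝ) := Nat.cast_nonneg _
    have hb2 : ‖(((2*n+s:ℕ):ℂ) - 1)‖ ≤ 2*((s+2)*2^n) := by
      calc ‖(((2*n+s:ℕ):ℂ) - 1)‖ ≤ ‖((2*n+s:ℕ):ℂ)‖ + ‖(1:ℂ)‖ := norm_sub_le _ _
        _ = ((2*n+s:ℕ):ℝ) + 1 := by rw [Complex.norm_natCast, norm_one]
        _ ≤ (s+2)*2^n + (s+2)*2^n := by
            have := h2n n
            nlinarith
        _ = 2*((s+2)*2^n) := by ring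
    calc ((2*n+s:ℕ):ℝ) * ‖(((2*n+s:ℕ):ℂ) - 1)‖ * (|u|^s * (‖b n‖ * (u^2)^n))
        ≤ ((s+2)*2^n) * (2*((s+2)*2^n)) * (|u|^s * (‖b n‖ * (u^2)^n)) := by
          refine mul_le_mul_of_nonneg_right ?_ (by positivity)
          exact mul_le_mul hg1 hb2 (norm_nonneg _) (by positivity)
      _ = (2*(s+2)^2) * |u|^s * (‖b n‖ * (4*u^2)^n) := by
          rw [mul_pow, show ((4:ℝ))^n = 2^n * 2^n by rw [← mul_pow]; norm_num]
          ring
  have hS1 : Summable (fun n : ℕ =>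
      ((((2*lam+1:ℝ)):ℂ) * ((2*n+s:ℕ):ℂ)) * (b n * (u:ℂ)^(2*n+s))) := by
    apply sum_aux b s lam v hlam hrec (2*u^2) (by positivity) ((|2*lam+1| * (s+2)) * |u|^s)
    intro n
    rw [norm_mul, norm_term b s u n, norm_mul, Complex.norm_natCast, Complex.norm_real,
      Real.norm_eq_abs]
    have hg1 : ((2*n+s:ℕ):ℝ) ≤ (s+2)*2^n := two_mul_add_le s n
    calc |2*lam+1| * ((2*n+s:ℕ):ℝ) * (|u|^s * (‖b n‖ * (u^2)^n))
        ≤ |2*lam+1| * ((s+2)*2^n) * (|u|^s * (‖b n‖ * (u^2)^n)) := by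
          refine mul_le_mul_of_nonneg_right
            (mul_le_mul_of_nonneg_left hg1 (abs_nonneg _)) (by positivity)
      _ = (|2*lam+1| * (s+2)) * |u|^s * (‖b n‖ * (2*u^2)^n) := by
          rw [mul_pow]; ring
  have hS0 : Summable (fun n : ℕ =>
      ((mu:ℂ) * (1 - (-1:ℂ)^s)) * (b n * (u:ℂ)^(2*n+s))) := hTsum.mul_left _
  have hq : Summable (fun n : ℕ =>
      (((2*(n:ℝ))*(2*(n:ℝ)+2*(s:ℝ)+2*lam) : ℝ):ℂ) * (b n * (u:ℂ)^(2*n+s))) := by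
    apply sum_aux b s lam v hlam hrec (4*u^2) (by positivity)
      (((s+2)*(2*s+2+2*|lam|)) * |u|^s)
    intro n
    rw [norm_mul, norm_term b s u n, Complex.norm_real, Real.norm_eq_abs]
    have hg1 : ((2*n+s:ℕ):ℝ) ≤ (s+2)*2^n := two_mul_add_le s n
    push_cast at hg1
    have hnn : (0:ℝ) ≤ (n:ℝ) := Nat.cast_nonneg n
    have hq1 : |(2*(n:ℝ))*(2*(n:ℝ)+2*(s:ℝ)+2*lam)| ≤ ((s+2)*2^n)*((2*s+2+2*|lam|)*2^n) := by
      rw [abs_mul]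
      refine mul_le_mul ?_ ?_ (abs_nonneg _) (by positivity)
      · rw [abs_of_nonneg (by positivity)]
        linarith
      · calc |2*(n:ℝ)+2*(s:ℝ)+2*lam| ≤ |2*(n:ℝ)+2*(s:ℝ)| + |2*lam| := abs_add_le _ _
          _ = (2*(n:ℝ)+2*(s:ℝ)) + 2*|lam| := by
              rw [abs_of_nonneg (by positivity), abs_mul, abs_of_nonneg (by norm_num : (0:ℝ) ≤ 2)]
          _ ≤ (2*s+2+2*|lam|)*2^n := by
              have := h2n n
              nlinarith [abs_nonneg lam]
    calc |(2*(n:ℝ))*(2*(n:ℝ)+2*(s:ℝ)+2*lam)| * (|u|^s * (‖b n‖ * (u^2)^n))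
        ≤ (((s+2)*2^n)*((2*s+2+2*|lam|)*2^n)) * (|u|^s * (‖b n‖ * (u^2)^n)) :=
          mul_le_mul_of_nonneg_right hq1 (by positivity)
      _ = ((s+2)*(2*s+2+2*|lam|)) * |u|^s * (‖b n‖ * (4*u^2)^n) := by
          rw [mul_pow, show ((4:ℝ))^n = 2^n * 2^n by rw [← mul_pow]; norm_num]
          ring
  -- gf at -u
  have hneg : gf b s (-u) = (-1:ℂ)^s * gf b s u := by
    rw [gf, gf, ← tsum_mul_left]
    refine tsum_congr fun n => ?_
    rw [Complex.ofReal_neg, neg_pow, pow_add, pow_mul, neg_one_sq, one_pow]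
    ring
  -- the three pieces
  have hA2 : (u:ℂ)^2 * gf2 b s u = ∑' n : ℕ,
      (((2*n+s:ℕ):ℂ) * (((2*n+s:ℕ):ℂ) - 1)) * (b n * (u:ℂ)^(2*n+s)) := by
    rw [gf2, ← tsum_mul_left]
    refine tsum_congr fun n => ?_
    have h := pow_shift2 (u:ℂ) (2*n+s)
    linear_combination (b n) * h
  have hA1 : ((((2*lam+1:ℝ)):ℂ) * (u:ℂ)) * gf1 b s u = ∑' n : ℕ,
      ((((2*lam+1:ℝ)):ℂ) * ((2*n+s:ℕ):ℂ)) * (b n * (u:ℂ)^(2*n+s)) := by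
    rw [gf1, ← tsum_mul_left]
    refine tsum_congr fun n => ?_
    have h := pow_shift1 (u:ℂ) (2*n+s)
    linear_combination (((2*lam+1:ℝ)):ℂ) * (b n) * h
  have hA0 : (mu:ℂ) * (gf b s u - gf b s (-u)) = ∑' n : ℕ,
      ((mu:ℂ) * (1 - (-1:ℂ)^s)) * (b n * (u:ℂ)^(2*n+s)) := by
    rw [hneg]
    have h : (mu:ℂ) * (gf b s u - (-1:ℂ)^s * gf b s u)
        = ((mu:ℂ)*(1-(-1:ℂ)^s)) * gf b s u := by ring
    rw [h, gf, ← tsum_mul_left]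
  -- the key identity
  have key : (u:ℂ)^2 * gf2 b s u + ((((2*lam+1:ℝ)):ℂ) * (u:ℂ)) * gf1 b s u
      - (mu:ℂ) * (gf b s u - gf b s (-u))
      = -(v:ℂ)^2 * ((u:ℂ)^2 * gf b s u) := by
    rw [hA2, hA1, hA0, ← Summable.tsum_add hS2 hS1, ← Summable.tsum_sub (hS2.add hS1) hS0]
    have hcong : ∀ n : ℕ,
        (((2*n+s:ℕ):ℂ) * (((2*n+s:ℕ):ℂ) - 1)) * (b n * (u:ℂ)^(2*n+s))
        + ((((2*lam+1:ℝ)):ℂ) * ((2*n+s:ℕ):ℂ)) * (b n * (u:ℂ)^(2*n+s))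
        - ((mu:ℂ) * (1 - (-1:ℂ)^s)) * (b n * (u:ℂ)^(2*n+s))
        = (((2*(n:ℝ))*(2*(n:ℝ)+2*(s:ℝ)+2*lam) : ℝ):ℂ) * (b n * (u:ℂ)^(2*n+s)) := by
      intro n
      have hmuC := congrArg (Complex.ofReal) hmu
      push_cast at hmuC ⊢
      linear_combination (-(b n * (u:ℂ)^(2*n+s))) * hmuC
    rw [tsum_congr hcong, Summable.tsum_eq_zero_add hq]
    simp only [Nat.cast_zero, mul_zero, zero_mul, Complex.ofReal_zero, zero_add]
    have hstep : ∀ n : ℕ,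
        (((2*((n+1:ℕ):ℝ))*(2*((n+1:ℕ):ℝ)+2*(s:ℝ)+2*lam) : ℝ):ℂ) * (b (n+1) * (u:ℂ)^(2*(n+1)+s))
        = (-(v:ℂ)^2 * (u:ℂ)^2) * (b n * (u:ℂ)^(2*n+s)) := by
      intro n
      have h := hrec n
      have hexp : 2*(n+1)+s = (2*n+s)+2 := by ring
      rw [hexp, pow_add]
      push_cast at h ⊢
      linear_combination ((u:ℂ)^(2*n+s) * (u:ℂ)^2) * h
    calc (∑' n : ℕ, (((2*((n+1:ℕ):ℝ))*(2*((n+1:ℕ):ℝ)+2*(s:ℝ)+2*lam) : ℝ):ℂ)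
            * (b (n+1) * (u:ℂ)^(2*(n+1)+s)))
        = ∑' n : ℕ, (-(v:ℂ)^2 * (u:ℂ)^2) * (b n * (u:ℂ)^(2*n+s)) := tsum_congr hstep
      _ = (-(v:ℂ)^2 * (u:ℂ)^2) * ∑' n : ℕ, b n * (u:ℂ)^(2*n+s) := tsum_mul_left
      _ = -(v:ℂ)^2 * ((u:ℂ)^2 * gf b s u) := by rw [gf]; ring
  -- conclude
  refine mul_left_cancel₀ (pow_ne_zero 2 hU) ?_
  have expand : (u:ℂ)^2 * (gf2 b s u + (((2*lam+1)/u : ℝ):ℂ) * gf1 b s u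
      - (mu:ℂ) * (gf b s u - gf b s (-u)) / (u:ℂ)^2)
      = (u:ℂ)^2 * gf2 b s u + ((((2*lam+1:ℝ)):ℂ) * (u:ℂ)) * gf1 b s u
        - (mu:ℂ) * (gf b s u - gf b s (-u)) := by
    push_cast
    field_simp
  rw [expand, key]
  ring

end Core


section Concrete

/-- Taylor coefficient of the normalized Bessel function. -/
def dcoef (m v : ℝ) (k : ℕ) : ℝ :=
  Real.Gamma (m+1) * ((-1)^k / (Nat.factorial k * Real.Gamma (k+m+1))) * (v/2)^(2*k)

lemma drec (m : ℝ) (hm : -1 < m) (v : ℝ) (k : ℕ) :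
    ((2*k+2) * (2*k+2+2*m)) * dcoef m v (k+1) = -v^2 * dcoef m v k := by
  have hkm : (0:ℝ) < (k:ℝ)+m+1 := by
    have : (0:ℝ) ≤ (k:ℝ) := Nat.cast_nonneg k
    linarith
  have hG : Real.Gamma ((k:ℝ)+m+1) ≠ 0 := ne_of_gt (Real.Gamma_pos_of_pos hkm)
  have hGrec : Real.Gamma (((k+1:ℕ):ℝ)+m+1) = ((k:ℝ)+m+1) * Real.Gamma ((k:ℝ)+m+1) := by
    have h : (((k+1:ℕ):ℝ)) + m + 1 = ((k:ℝ)+m+1) + 1 := by push_cast; ring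
    rw [h, Real.Gamma_add_one (ne_of_gt hkm)]
  unfold dcoef
  rw [hGrec, Nat.factorial_succ]
  have hfac : ((Nat.factorial k : ℝ)) ≠ 0 := Nat.cast_ne_zero.mpr (Nat.factorial_ne_zero k)
  push_cast
  field_simp
  ring

def bA (l v : ℝ) : ℕ → ℂ := fun k => ((dcoef l v k : ℝ) : ℂ)

def bB (r : ℕ) (l v : ℝ) : ℕ → ℂ := fun k =>
  Complex.I * (-1:ℂ)^(r+1) *
    ((v^(2*r+1) / (2^(2*r+1) * poch (l+1) (2*r+1)) * dcoef (l+(2*(r:ℝ)+1)) v k : ℝ) : ℂ)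

lemma nbessel_series (m v w : ℝ) : ((nbessel m (w*v) : ℝ) : ℂ)
    = ∑' k : ℕ, ((dcoef m v k : ℝ) : ℂ) * (w:ℂ)^(2*k) := by
  rw [nbessel, Complex.ofReal_mul, Complex.ofReal_tsum, ← tsum_mul_left]
  refine tsum_congr fun k => ?_
  unfold dcoef
  push_cast
  ring

lemma decompA (l v w : ℝ) : ((nbessel l (w*v) : ℝ) : ℂ) = gf (bA l v) 0 w := by
  rw [nbessel_series l v w, gf]
  refine tsum_congr fun k => ?_
  simp [bA]

lemma decompB (r : ℕ) (l v w : ℝ) :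
    Complex.I * (-1:ℂ)^(r+1) *
      (((w*v)^(2*r+1) / (2^(2*r+1) * poch (l+1) (2*r+1)) : ℝ) : ℂ) *
      ((nbessel (l+(2*(r:ℝ)+1)) (w*v) : ℝ) : ℂ) = gf (bB r l v) (2*r+1) w := by
  rw [nbessel_series (l+(2*(r:ℝ)+1)) v w, gf, ← tsum_mul_left]
  refine tsum_congr fun k => ?_
  simp only [bB]
  push_cast
  ring

lemma hrecA (l : ℝ) (hl : -1 < l) (v : ℝ) : ∀ k : ℕ,
    ((((2*k+2) * (2*k+2*((0:ℕ):ℝ)+2+2*l)) : ℝ) : ℂ) * bA l v (k+1) = -(v:ℂ)^2 * bA l v k := by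
  intro k
  have h := congrArg (Complex.ofReal) (drec l hl v k)
  simp only [bA]
  push_cast at h ⊢
  linear_combination h

lemma hrecB (r : ℕ) (l : ℝ) (hl : -1 < l) (v : ℝ) : ∀ k : ℕ,
    ((((2*k+2) * (2*k+2*((2*r+1:ℕ):ℝ)+2+2*l)) : ℝ) : ℂ) * bB r l v (k+1)
      = -(v:ℂ)^2 * bB r l v k := by
  intro k
  have hm : (-1:ℝ) < l + (2*(r:ℝ)+1) := by
    have : (0:ℝ) ≤ (r:ℝ) := Nat.cast_nonneg r
    linarith
  have h := congrArg (Complex.ofReal) (drec (l+(2*(r:ℝ)+1)) hm v k)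
  simp only [bB]
  push_cast at h ⊢
  linear_combination (Complex.I * (-1:ℂ)^(r+1) *
    ((v:ℂ)^(2*r+1) / ((2:ℂ)^(2*r+1) * ((poch (l+1) (2*r+1) : ℝ) : ℂ)))) * h

end Concrete

end
end Stmt16Aux

open Stmt16Aux in
/-- u ↦ e_{2r+1}(uv, lambda) is an eigenfunction of delta_lambda with
eigenvalue -v². -/
theorem stmt16 (r : ℕ) (l : ℝ) (hl : -1 < l) (v : ℝ) (u : ℝ) (hu : u ≠ 0) :
    deltaOp r l (fun w => e2r1 r l (w * v)) u =
      -((v : ℂ) ^ 2) * e2r1 r l (u * v) := by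
  classical
  have hmuA : (l + 1/2 + 2*(r:ℝ)*(l+(r:ℝ)+1)) * (1 - (-1:ℝ)^(0:ℕ))
      = ((0:ℕ):ℝ) * (((0:ℕ):ℝ) + 2*l) := by simp
  have hmuB : (l + 1/2 + 2*(r:ℝ)*(l+(r:ℝ)+1)) * (1 - (-1:ℝ)^((2*r+1:ℕ)))
      = (((2*r+1:ℕ)):ℝ) * ((((2*r+1:ℕ)):ℝ) + 2*l) := by
    have hodd : (-1:ℝ)^(2*r+1) = -1 := Odd.neg_one_pow ⟨r, by ring⟩
    rw [hodd]; push_cast; ring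
  have hfunpt : ∀ w : ℝ, e2r1 r l (w * v)
      = gf (bA l v) 0 w + gf (bB r l v) (2*r+1) w := by
    intro w
    rw [e2r1, decompA l v w, ← decompB r l v w]
  have hfun : (fun w => e2r1 r l (w * v))
      = fun w => gf (bA l v) 0 w + gf (bB r l v) (2*r+1) w := funext hfunpt
  have hd1 : ∀ y : ℝ, HasDerivAt (fun w => e2r1 r l (w * v))
      (gf1 (bA l v) 0 y + gf1 (bB r l v) (2*r+1) y) y := by
    intro y
    rw [hfun]
    exact (hasDerivAt_gf (bA l v) 0 l v hl (hrecA l hl v) y).add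
      (hasDerivAt_gf (bB r l v) (2*r+1) l v hl (hrecB r l hl v) y)
  have hderiv : deriv (fun w => e2r1 r l (w * v))
      = fun y => gf1 (bA l v) 0 y + gf1 (bB r l v) (2*r+1) y :=
    funext fun y => (hd1 y).deriv
  have hd2 : HasDerivAt (fun y => gf1 (bA l v) 0 y + gf1 (bB r l v) (2*r+1) y)
      (gf2 (bA l v) 0 u + gf2 (bB r l v) (2*r+1) u) u :=
    (hasDerivAt_gf1 (bA l v) 0 l v hl (hrecA l hl v) u).add
      (hasDerivAt_gf1 (bB r l v) (2*r+1) l v hl (hrecB r l hl v) u)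
  have hit : iteratedDeriv 2 (fun w => e2r1 r l (w * v)) u
      = gf2 (bA l v) 0 u + gf2 (bB r l v) (2*r+1) u := by
    rw [show (2:ℕ) = 1 + 1 from rfl, iteratedDeriv_succ, iteratedDeriv_one, hderiv]
    exact hd2.deriv
  have cA := core_eq (bA l v) 0 l v hl (hrecA l hl v) u hu
    (l + 1/2 + 2*(r:ℝ)*(l+(r:ℝ)+1)) hmuA
  have cB := core_eq (bB r l v) (2*r+1) l v hl (hrecB r l hl v) u hu
    (l + 1/2 + 2*(r:ℝ)*(l+(r:ℝ)+1)) hmuB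
  rw [deltaOp, hit, hderiv, hfunpt u, hfunpt (-u)]
  push_cast at cA cB ⊢
  linear_combination cA + cB
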